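/- arXiv:2504.03319 — 2 statements merged into one kernel-verified Lean document; each statement's English description precedes it below -/
import Mathlib

section
/- For every $\delta>0$ and every $z_0\ge 0$ there exists $z_1>z_0$ such that for all $z\ge z_1$ and all $b\in[0,1]$, $\;\mathbb{P}[\Delta_z^b(T_1)\le z_0]<\delta$, where $\Delta_z^b(t)=\max\{z,\sup_{0\le s\le t}(\mu(b)s+\sigma(b)W_s)\}-(\mu(b)t+\sigma(b)W_t)$ and $T_1$ is the first renewal time, independent of $W$. -/
open MeasureTheory ProbabilityTheory Set Filter

noncomputable section

namespace DrawdownPaper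

variable {Ω : Type*}

/-- Drift coefficient `μ(b) = η - (1-b)θ` of the surplus under retention level `b`. -/
def drift (η θ b : ℝ) : ℝ := η - (1 - b) * θ

/-- Volatility `σ(b) = σ b` of the surplus under retention level `b`. -/
def vol (σ b : ℝ) : ℝ := σ * b

/-- The standard normal distribution function `Φ`. -/
def Phi (x : ℝ) : ℝ := ∫ u in Iic x, Real.exp (-u ^ 2 / 2) / Real.sqrt (2 * Real.pi)

section Prob

variable [MeasureSpace Ω]

/-- `W` is a standard Brownian motion: it starts in `0`, has independent, centred Gaussian
increments and continuous paths. -/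
structure IsBM (W : ℝ → Ω → ℝ) : Prop where
  meas : ∀ t, Measurable (W t)
  init : ∀ᵐ ω, W 0 ω = 0
  indepIncr : ∀ (n : ℕ) (t : ℕ → ℝ), Monotone t →
    iIndepFun
      (fun i : Fin n => fun ω => W (t (i + 1)) ω - W (t i) ω) ℙ
  gaussIncr : ∀ s t : ℝ, s ≤ t →
    Measure.map (fun ω => W t ω - W s ω) ℙ = gaussianReal 0 (Real.toNNReal (t - s))
  contPaths : ∀ᵐ ω, Continuous fun t => W t ω

/-- `T` is the sequence of arrival times of an ordinary renewal process:
`T 0 = 0` and the interarrival times are i.i.d. and strictly positive. -/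
structure IsRenewal (T : ℕ → Ω → ℝ) : Prop where
  meas : ∀ k, Measurable (T k)
  zero : ∀ ω, T 0 ω = 0
  strictMono : ∀ᵐ ω, StrictMono fun k => T k ω
  indep : iIndepFun (fun k ω => T (k + 1) ω - T k ω) ℙ
  ident : ∀ k, IdentDistrib (fun ω => T (k + 1) ω - T k ω) (T 1) ℙ ℙ

/-- The σ-algebra generated by a family of real random variables. -/
def sigmaGen {ι : Type*} (f : ι → Ω → ℝ) : MeasurableSpace Ω :=
  ⨆ i, MeasurableSpace.comap (f i) inferInstance

/-- Laplace transform `ℓ_T(r) = E[e^{-r T₁}]` of the interarrival distribution. -/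
def laplace (r : ℝ) (T1 : Ω → ℝ) : ℝ := ∫ ω, Real.exp (-r * T1 ω)

/-- Surplus path under the constant retention level `b` (started in `0`):
`X_t = μ(b) t + σ(b) W_t`. -/
def cpath (η θ σ : ℝ) (W : ℝ → Ω → ℝ) (b t : ℝ) (ω : Ω) : ℝ :=
  drift η θ b * t + vol σ b * W t ω

/-- Drawdown at time `t` under the constant retention level `b`, with initial drawdown `z`:
`Δ_z^b(t) = max{z, sup_{0≤s≤t} X_s} - X_t`. -/
def cdd (η θ σ : ℝ) (W : ℝ → Ω → ℝ) (b z t : ℝ) (ω : Ω) : ℝ :=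
  max z (sSup ((fun s => cpath η θ σ W b s ω) '' Icc 0 t)) - cpath η θ σ W b t ω

/-- Controlled surplus for a piecewise constant strategy given by the retention levels
`b k` on the observation intervals `[T k, T (k+1))`: a (locally finite) sum of drifted
Brownian increments. -/
def surplus (η θ σ : ℝ) (W : ℝ → Ω → ℝ) (T : ℕ → Ω → ℝ) (b : ℕ → Ω → ℝ)
    (t : ℝ) (ω : Ω) : ℝ :=
  ∑' k : ℕ,
    (drift η θ (b k ω) * (min t (T (k + 1) ω) - min t (T k ω)) +
      vol σ (b k ω) * (W (min t (T (k + 1) ω)) ω - W (min t (T k ω)) ω))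

/-- Controlled drawdown at time `t` with initial drawdown `z`. -/
def dd (η θ σ : ℝ) (W : ℝ → Ω → ℝ) (T : ℕ → Ω → ℝ) (b : ℕ → Ω → ℝ)
    (z t : ℝ) (ω : Ω) : ℝ :=
  max z (sSup ((fun s => surplus η θ σ W T b s ω) '' Icc 0 t)) -
    surplus η θ σ W T b t ω

/-- The σ-algebra `𝓕_{T_k}` of the information available at the `k`-th observation time:
generated by the Brownian path stopped at `T k` and by the observation times `T 0, …, T k`. -/
def obsSigma (W : ℝ → Ω → ℝ) (T : ℕ → Ω → ℝ) (k : ℕ) : MeasurableSpace Ω :=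
  (⨆ s : ℝ, MeasurableSpace.comap (fun ω => W (min s (T k ω)) ω) inferInstance) ⊔
    ⨆ j : Fin (k + 1), MeasurableSpace.comap (T j) inferInstance

/-- A strategy `b : ℕ → Ω → ℝ` is admissible if each `b k` is `𝓕_{T_k}`-measurable with
values in `[0,1]`. -/
structure Admissible (W : ℝ → Ω → ℝ) (T : ℕ → Ω → ℝ) (b : ℕ → Ω → ℝ) : Prop where
  mem : ∀ k ω, b k ω ∈ Icc (0 : ℝ) 1
  meas : ∀ k, Measurable[obsSigma W T k] (b k)

/-- The cost of a strategy: expected discounted number of observations of the drawdown in the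
critical area `(d, ∞)`. -/
def cost (η θ σ d r : ℝ) (W : ℝ → Ω → ℝ) (T : ℕ → Ω → ℝ) (b : ℕ → Ω → ℝ)
    (z : ℝ) : ℝ :=
  ∫ ω, ∑' k : ℕ, Real.exp (-r * T k ω) *
    Set.indicator (Ioi d) 1 (dd η θ σ W T b z (T k ω) ω)

/-- The value function `v(z) = inf_B v^B(z)`. -/
def value (η θ σ d r : ℝ) (W : ℝ → Ω → ℝ) (T : ℕ → Ω → ℝ) (z : ℝ) : ℝ :=
  sInf ((fun b => cost η θ σ d r W T b z) '' {b | Admissible W T b})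

/-- One-step expected discounted cost `E[e^{-r T₁} f(Δ_z^b(T₁))]` under the constant
retention level `b`. -/
def oneStep (η θ σ r : ℝ) (W : ℝ → Ω → ℝ) (T1 : Ω → ℝ) (f : ℝ → ℝ) (b z : ℝ) : ℝ :=
  ∫ ω, Real.exp (-r * T1 ω) * f (cdd η θ σ W b z (T1 ω) ω)

/-- The Bellman operator `𝒯(f)(z) = 1_{z>d} + inf_{b ∈ [0,1]} E[e^{-r T₁} f(Δ_z^b(T₁))]`. -/
def bellman (η θ σ d r : ℝ) (W : ℝ → Ω → ℝ) (T1 : Ω → ℝ) (f : ℝ → ℝ) (z : ℝ) : ℝ :=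
  Set.indicator (Ioi d) 1 z + ⨅ b : Icc (0 : ℝ) 1, oneStep η θ σ r W T1 f (b : ℝ) z

end Prob

/-- For every `δ > 0` and `z₀ ≥ 0` there is `z₁ > z₀` such that, uniformly in `b ∈ [0,1]`,
the drawdown observed at `T₁` lies below `z₀` with probability less than `δ`, for all
initial drawdowns `z ≥ z₁`. -/
theorem drawdown_stays_large {Ω : Type*} [MeasureSpace Ω] [IsProbabilityMeasure (ℙ : Measure Ω)]
    (σ η θ d r : ℝ) (hσ : 0 < σ) (hη : 0 < η) (hηθ : η < θ) (hd : 0 < d) (hr : 0 < r)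
    (W : ℝ → Ω → ℝ) (hW : IsBM W)
    (T1 : Ω → ℝ) (hT1 : Measurable T1) (hT1pos : ∀ᵐ ω, 0 < T1 ω)
    (hWT : Indep (sigmaGen W) (MeasurableSpace.comap T1 inferInstance) ℙ) :
    ∀ δ, 0 < δ → ∀ z0, 0 ≤ z0 → ∃ z1, z0 < z1 ∧
      ∀ z, z1 ≤ z → ∀ b ∈ Icc (0 : ℝ) 1,
        (ℙ {ω | cdd η θ σ W b z (T1 ω) ω ≤ z0}).toReal < δ := by
  intro δ hδ z0 hz0
  set ε : ENNReal := ENNReal.ofReal δ / 2 with hεdef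
  have hεpos : 0 < ε := ENNReal.div_pos (ENNReal.ofReal_pos.mpr hδ).ne' (by norm_num)
  -- Step 1: choose m with ℙ{m < T1} < ε
  have hCtend : Tendsto (fun n : ℕ => ℙ {ω : Ω | (n : ℝ) < T1 ω}) atTop
      (nhds (ℙ (⋂ n : ℕ, {ω : Ω | (n : ℝ) < T1 ω}))) := by
    apply tendsto_measure_iInter_atTop
    · exact fun n => (measurableSet_lt measurable_const hT1).nullMeasurableSet
    · intro a b hab ω hω
      exact lt_of_le_of_lt (Nat.cast_le.mpr hab : (a:ℝ) ≤ b) hω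
    · exact ⟨0, measure_ne_top _ _⟩
  have hCempty : (⋂ n : ℕ, {ω : Ω | (n : ℝ) < T1 ω}) = ∅ := by
    ext ω
    simp only [Set.mem_iInter, Set.mem_setOf_eq, Set.mem_empty_iff_false, iff_false, not_forall,
      not_lt]
    obtain ⟨n, hn⟩ := exists_nat_gt (T1 ω)
    exact ⟨n, hn.le⟩
  rw [hCempty, measure_empty] at hCtend
  obtain ⟨m, hm⟩ := (hCtend.eventually (gt_mem_nhds hεpos)).exists
  -- Step 2: choose K with ℙ(B K) < ε
  set B : ℕ → Set Ω := fun K =>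
    ⋃ (q : ℚ) (_ : (q : ℝ) ∈ Icc (0 : ℝ) (m : ℝ)), {ω : Ω | (K : ℝ) < |W (q : ℝ) ω|} with hBdef
  have hBmeas : ∀ K, MeasurableSet (B K) := by
    intro K
    exact MeasurableSet.iUnion fun q => MeasurableSet.iUnion fun _ =>
      measurableSet_lt measurable_const (hW.meas _).abs
  have hBanti : Antitone B := by
    intro a b hab ω hω
    simp only [hBdef, Set.mem_iUnion, Set.mem_setOf_eq] at hω ⊢
    obtain ⟨q, hq, h⟩ := hω
    exact ⟨q, hq, lt_of_le_of_lt (by exact_mod_cast Nat.cast_le.mpr hab) h⟩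
  have hBinter : (⋂ K : ℕ, B K) ⊆ {ω : Ω | ¬ Continuous fun t => W t ω} := by
    intro ω hω hcont
    obtain ⟨C, hC⟩ := isCompact_Icc.exists_bound_of_continuousOn
      (f := fun t : ℝ => W t ω) (hcont.continuousOn (s := Icc (0:ℝ) (m:ℝ)))
    obtain ⟨K, hK⟩ := exists_nat_gt C
    have := Set.mem_iInter.mp hω K
    simp only [hBdef, Set.mem_iUnion, Set.mem_setOf_eq] at this
    obtain ⟨q, hq, h⟩ := this
    have := hC _ hq
    rw [Real.norm_eq_abs] at this
    linarith
  have hBtend : Tendsto (fun K => ℙ (B K)) atTop (nhds (ℙ (⋂ K : ℕ, B K))) :=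
    tendsto_measure_iInter_atTop (fun K => (hBmeas K).nullMeasurableSet) hBanti
      ⟨0, measure_ne_top _ _⟩
  have hBzero : ℙ (⋂ K : ℕ, B K) = 0 := by
    refine le_antisymm ?_ zero_le
    calc ℙ (⋂ K : ℕ, B K) ≤ ℙ {ω : Ω | ¬ Continuous fun t => W t ω} := measure_mono hBinter
      _ = 0 := ae_iff.mp hW.contPaths
  rw [hBzero] at hBtend
  obtain ⟨K, hK⟩ := (hBtend.eventually (gt_mem_nhds hεpos)).exists
  -- Step 3: conclude
  refine ⟨z0 + η * m + σ * K + 1, by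
    nlinarith [mul_nonneg hη.le (Nat.cast_nonneg m : (0:ℝ) ≤ m),
      mul_nonneg hσ.le (Nat.cast_nonneg K : (0:ℝ) ≤ K)], ?_⟩
  intro z hz b hb
  have hincl : {ω : Ω | cdd η θ σ W b z (T1 ω) ω ≤ z0} ⊆
      (({ω : Ω | ¬ Continuous fun t => W t ω} ∪ {ω : Ω | ¬ 0 < T1 ω}) ∪
        {ω : Ω | (m : ℝ) < T1 ω}) ∪ B K := by
    intro ω hmem
    by_contra hnot
    simp only [Set.mem_union, Set.mem_setOf_eq, not_or, not_not, not_lt] at hnot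
    obtain ⟨⟨⟨hcont, ht0'⟩, htM⟩, hnB⟩ := hnot
    have ht0 : 0 < T1 ω := by
      by_contra h
      exact absurd ht0' (by simpa using h)
    set t := T1 ω with htdef
    have hbound : ∀ q : ℚ, (q : ℝ) ∈ Icc (0 : ℝ) (m : ℝ) → |W (q : ℝ) ω| ≤ K := by
      intro q hq
      by_contra h
      exact hnB (Set.mem_iUnion.mpr ⟨q, Set.mem_iUnion.mpr ⟨hq, not_le.mp h⟩⟩)
    -- |W t ω| ≤ K
    have hWt : |W t ω| ≤ K := by
      by_contra h
      push_neg at h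
      have hgc : Continuous fun s : ℝ => |W s ω| := hcont.abs
      have hopen : IsOpen {s : ℝ | (K : ℝ) < |W s ω|} :=
        isOpen_lt continuous_const hgc
      obtain ⟨e, he, hball⟩ := Metric.isOpen_iff.mp hopen t h
      obtain ⟨q, hq1, hq2⟩ := exists_rat_btwn (show max 0 (t - e) < t from
        max_lt ht0 (by linarith))
      have hq0 : (0 : ℝ) ≤ q := le_of_lt (lt_of_le_of_lt (le_max_left _ _) hq1)
      have hqe : t - e < q := lt_of_le_of_lt (le_max_right _ _) hq1
      have hqball : (q : ℝ) ∈ Metric.ball t e := by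
        rw [Metric.mem_ball, Real.dist_eq, abs_sub_lt_iff]
        constructor <;> linarith
      have := hball hqball
      have hqIcc : (q : ℝ) ∈ Icc (0 : ℝ) (m : ℝ) := ⟨hq0, le_trans hq2.le htM⟩
      exact absurd (hbound q hqIcc) (not_le.mpr this)
    -- cpath bound
    have hcpath : cpath η θ σ W b t ω ≤ η * m + σ * K := by
      have hb0 := hb.1
      have hb1 := hb.2
      have h1 : drift η θ b * t ≤ η * m := by
        have hdle : drift η θ b ≤ η := by
          simp only [drift]
          nlinarith
        nlinarith [ht0.le, htM]
      have h2 : vol σ b * W t ω ≤ σ * K := by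
        have hA : b * W t ω ≤ (K : ℝ) := by
          calc b * W t ω ≤ b * |W t ω| := mul_le_mul_of_nonneg_left (le_abs_self _) hb0
            _ ≤ 1 * |W t ω| := mul_le_mul_of_nonneg_right hb1 (abs_nonneg _)
            _ = |W t ω| := one_mul _
            _ ≤ K := hWt
        simp only [vol]
        rw [mul_assoc]
        exact mul_le_mul_of_nonneg_left hA hσ.le
      simp only [cpath]
      linarith
    have hcdd : z0 < cdd η θ σ W b z t ω := by
      have : z - cpath η θ σ W b t ω ≤ cdd η θ σ W b z t ω := by
        simp only [cdd]
        have := le_max_left z (sSup ((fun s => cpath η θ σ W b s ω) '' Icc 0 t))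
        linarith
      linarith [hz]
    exact absurd hmem (not_le.mpr hcdd)
  have hE : ℙ ({ω : Ω | ¬ Continuous fun t => W t ω} ∪ {ω : Ω | ¬ 0 < T1 ω}) = 0 :=
    measure_union_null (ae_iff.mp hW.contPaths) (ae_iff.mp hT1pos)
  have hlt : ℙ {ω : Ω | cdd η θ σ W b z (T1 ω) ω ≤ z0} < ENNReal.ofReal δ := by
    calc ℙ {ω : Ω | cdd η θ σ W b z (T1 ω) ω ≤ z0}
        ≤ ℙ ((({ω : Ω | ¬ Continuous fun t => W t ω} ∪ {ω : Ω | ¬ 0 < T1 ω}) ∪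
          {ω : Ω | (m : ℝ) < T1 ω}) ∪ B K) := measure_mono hincl
      _ ≤ ℙ (({ω : Ω | ¬ Continuous fun t => W t ω} ∪ {ω : Ω | ¬ 0 < T1 ω}) ∪
          {ω : Ω | (m : ℝ) < T1 ω}) + ℙ (B K) := measure_union_le _ _
      _ ≤ (ℙ ({ω : Ω | ¬ Continuous fun t => W t ω} ∪ {ω : Ω | ¬ 0 < T1 ω}) +
          ℙ {ω : Ω | (m : ℝ) < T1 ω}) + ℙ (B K) := by
          gcongr
          exact measure_union_le _ _
      _ = ℙ {ω : Ω | (m : ℝ) < T1 ω} + ℙ (B K) := by rw [hE, zero_add]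
      _ < ε + ε := ENNReal.add_lt_add hm hK
      _ = ENNReal.ofReal δ := by
          rw [hεdef, ENNReal.add_halves]
  exact ENNReal.toReal_lt_of_lt_ofReal hlt

end DrawdownPaper
end
end

section
/- The value function satisfies $\lim_{z\to\infty} v(z)=\dfrac{1}{1-\ell_T(r)}$, where $\ell_T(r)=\mathbb{E}[e^{-rT_1}]$. -/
open MeasureTheory ProbabilityTheory Set Filter

noncomputable section

namespace DrawdownPaper

variable {Ω : Type*}

section Aux

set_option linter.unusedSectionVars false
set_option linter.unusedVariables false
set_option maxHeartbeats 1000000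

variable [MeasureSpace Ω] [IsProbabilityMeasure (ℙ : Measure Ω)]

/-- Composition  `ω ↦ W (τ ω) ω` is measurable when `τ` has countable range. -/
lemma measurable_W_comp_countable (W : ℝ → Ω → ℝ) (hW : ∀ t, Measurable (W t))
    (τ : Ω → ℝ) (hτ : Measurable τ) (hc : (Set.range τ).Countable) :
    Measurable fun ω => W (τ ω) ω := by
  intro B hB
  have h : (fun ω => W (τ ω) ω) ⁻¹' B = ⋃ c ∈ Set.range τ, (τ ⁻¹' {c} ∩ W c ⁻¹' B) := by
    ext ω
    simp only [mem_preimage, mem_iUnion, mem_inter_iff, mem_singleton_iff]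
    constructor
    · intro h; exact ⟨τ ω, ⟨ω, rfl⟩, rfl, h⟩
    · rintro ⟨c, _, h1, h2⟩; rw [h1]; exact h2
  rw [h]
  exact MeasurableSet.biUnion hc fun c _ => (hτ (measurableSet_singleton c)).inter (hW c hB)

/-- Composition `ω ↦ W (τ ω) ω` is a.e. measurable for measurable `τ` when the paths
are a.s. continuous. -/
lemma aemeasurable_W_comp (W : ℝ → Ω → ℝ) (hW : ∀ t, Measurable (W t))
    (hcont : ∀ᵐ ω, Continuous fun t => W t ω)
    (τ : Ω → ℝ) (hτ : Measurable τ) : AEMeasurable (fun ω => W (τ ω) ω) ℙ := by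
  set e : ℕ → Ω → ℝ := fun n ω => (⌈τ ω * 2 ^ n⌉ : ℤ) / 2 ^ n with he
  have hem : ∀ n, Measurable (e n) := by
    intro n
    exact (measurable_from_top.comp ((hτ.mul_const _).ceil)).div_const _
  have hec : ∀ n, (Set.range (e n)).Countable := by
    intro n
    have : Set.range (e n) ⊆ Set.range (fun z : ℤ => (z : ℝ) / 2 ^ n) := by
      rintro x ⟨ω, rfl⟩; exact ⟨⌈τ ω * 2 ^ n⌉, rfl⟩
    exact (Set.countable_range _).mono this
  have hlim : ∀ ω, Tendsto (fun n => e n ω) atTop (nhds (τ ω)) := by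
    intro ω
    have h1 : ∀ n : ℕ, τ ω ≤ e n ω := by
      intro n
      rw [he]
      rw [le_div_iff₀ (by positivity)]
      exact Int.le_ceil _
    have h2 : ∀ n : ℕ, e n ω ≤ τ ω + (2 ^ n)⁻¹ := by
      intro n
      rw [he]
      rw [div_le_iff₀ (by positivity)]
      have := (Int.ceil_lt_add_one (τ ω * 2 ^ n)).le
      calc ((⌈τ ω * 2 ^ n⌉ : ℤ) : ℝ) ≤ τ ω * 2 ^ n + 1 := this
        _ = (τ ω + (2 ^ n)⁻¹) * 2 ^ n := by field_simp
    have hub : Tendsto (fun n : ℕ => τ ω + ((2 : ℝ) ^ n)⁻¹) atTop (nhds (τ ω + 0)) := by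
      exact tendsto_const_nhds.add (tendsto_inv_atTop_zero.comp (tendsto_pow_atTop_atTop_of_one_lt one_lt_two))
    rw [add_zero] at hub
    exact tendsto_of_tendsto_of_tendsto_of_le_of_le tendsto_const_nhds hub h1 h2
  refine aemeasurable_of_tendsto_metrizable_ae atTop
    (fun n => (measurable_W_comp_countable W hW (e n) (hem n) (hec n)).aemeasurable) ?_
  filter_upwards [hcont] with ω hω
  exact (hω.tendsto (τ ω)).comp (hlim ω)

/-- The σ-algebra of null-measurable sets. -/
def nullAlg (μ : Measure Ω) : MeasurableSpace Ω where
  MeasurableSet' s := NullMeasurableSet s μ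
  measurableSet_empty := MeasurableSet.nullMeasurableSet .empty
  measurableSet_compl s hs := hs.compl
  measurableSet_iUnion f hf := NullMeasurableSet.iUnion hf

lemma comap_le_nullAlg {g : Ω → ℝ} (hg : AEMeasurable g ℙ) :
    MeasurableSpace.comap g inferInstance ≤ nullAlg (ℙ : Measure Ω) := by
  rintro A ⟨s, hs, rfl⟩
  exact hg.nullMeasurable hs

lemma aemeasurable_of_nullAlg {b : Ω → ℝ} (hb : Measurable[nullAlg (ℙ : Measure Ω)] b) :
    AEMeasurable b ℙ := by
  have : NullMeasurable b (ℙ : Measure Ω) := fun s hs => hb hs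
  exact this.aemeasurable

/-- tsum of a.e.-measurable functions which are a.e. summable. -/
lemma aemeasurable_tsum {f : ℕ → Ω → ℝ} (hm : ∀ n, AEMeasurable (f n) ℙ)
    (hs : ∀ᵐ ω, Summable fun n => f n ω) :
    AEMeasurable (fun ω => ∑' n, f n ω) ℙ := by
  refine aemeasurable_of_tendsto_metrizable_ae atTop
    (fun N => Finset.aemeasurable_fun_sum (Finset.range N) fun n _ => hm n) ?_
  filter_upwards [hs] with ω hω using hω.hasSum.tendsto_sum_nat

/-- ciSup of countably many a.e.-measurable functions, a.e. bounded above. -/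
lemma aemeasurable_ciSup {h : ℕ → Ω → ℝ} (hm : ∀ n, AEMeasurable (h n) ℙ)
    (hb : ∀ᵐ ω, BddAbove (Set.range fun n => h n ω)) :
    AEMeasurable (fun ω => ⨆ n, h n ω) ℙ := by
  set p : ℕ → Ω → ℝ := fun N => Nat.rec (h 0) (fun n q ω => max (q ω) (h (n + 1) ω)) N with hp
  have hpm : ∀ N, AEMeasurable (p N) ℙ := by
    intro N
    induction N with
    | zero => exact hm 0
    | succ n ih => exact ih.max (hm (n + 1))
  have hmono : ∀ ω, Monotone fun N => p N ω := by
    intro ω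
    apply monotone_nat_of_le_succ
    intro n
    exact le_max_left _ _
  have hle : ∀ ω N n, n ≤ N → h n ω ≤ p N ω := by
    intro ω N
    induction N with
    | zero => intro n hn; interval_cases n; exact le_rfl
    | succ N ih =>
      intro n hn
      rcases Nat.lt_or_ge n (N + 1) with h1 | h1
      · exact (ih n (Nat.lt_succ_iff.mp h1)).trans (le_max_left _ _)
      · have : n = N + 1 := le_antisymm hn h1
        rw [this]; exact le_max_right _ _
  refine aemeasurable_of_tendsto_metrizable_ae atTop (fun N => hpm N) ?_
  filter_upwards [hb] with ω hω
  have hple : ∀ N, p N ω ≤ ⨆ n, h n ω := by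
    intro N
    induction N with
    | zero => exact le_ciSup hω 0
    | succ N ih => exact max_le ih (le_ciSup hω (N + 1))
  have hbp : BddAbove (Set.range fun N => p N ω) := by
    refine ⟨⨆ n, h n ω, ?_⟩
    rintro x ⟨N, rfl⟩
    exact hple N
  have h1 : Tendsto (fun N => p N ω) atTop (nhds (⨆ N, p N ω)) :=
    tendsto_atTop_ciSup (hmono ω) hbp
  have h2 : (⨆ N, p N ω) = ⨆ n, h n ω := by
    apply le_antisymm
    · exact ciSup_le hple
    · exact ciSup_le fun n => (hle ω n n le_rfl).trans (le_ciSup hbp n)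
  rwa [h2] at h1

variable {T : ℕ → Ω → ℝ} {r : ℝ}

lemma IsRenewal.ae_mono (hT : IsRenewal T) : ∀ᵐ ω, Monotone fun k => T k ω :=
  hT.strictMono.mono fun _ h => h.monotone

lemma IsRenewal.ae_nonneg (hT : IsRenewal T) : ∀ᵐ ω, ∀ k, 0 ≤ T k ω := by
  filter_upwards [hT.ae_mono] with ω h k
  simpa [hT.zero ω] using h (Nat.zero_le k)

lemma exp_measurable (hT : IsRenewal T) (k : ℕ) :
    Measurable fun ω => Real.exp (-r * T k ω) :=
  Real.measurable_exp.comp (measurable_const.mul (hT.meas k))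

lemma exp_le_one (hT : IsRenewal T) (hr : 0 < r) (k : ℕ) :
    ∀ᵐ ω, Real.exp (-r * T k ω) ≤ 1 := by
  filter_upwards [hT.ae_nonneg] with ω h
  rw [← Real.exp_zero]
  apply Real.exp_le_exp.2
  have := h k
  nlinarith

lemma exp_integrable (hT : IsRenewal T) (hr : 0 < r) (k : ℕ) :
    Integrable (fun ω => Real.exp (-r * T k ω)) ℙ := by
  refine Integrable.mono' (integrable_const 1) (exp_measurable hT k).aestronglyMeasurable ?_
  filter_upwards [exp_le_one hT hr k] with ω h
  rwa [Real.norm_eq_abs, abs_of_pos (Real.exp_pos _)]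

lemma integral_exp_eq (hT : IsRenewal T) (hr : 0 < r) (k : ℕ) :
    ∫ ω, Real.exp (-r * T k ω) = laplace r (T 1) ^ k := by
  set g : ℕ → Ω → ℝ := fun j ω => Real.exp (-r * (T (j + 1) ω - T j ω)) with hg
  have hgm : ∀ j, Measurable (g j) :=
    fun j => Real.measurable_exp.comp (measurable_const.mul ((hT.meas (j + 1)).sub (hT.meas j)))
  have hkey : ∀ k ω, Real.exp (-r * T k ω) = ∏ j ∈ Finset.range k, g j ω := by
    intro k ω
    rw [← Real.exp_sum]
    congr 1
    rw [← Finset.mul_sum, Finset.sum_range_sub (fun j => T j ω), hT.zero ω, sub_zero]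
  have hprodm : ∀ k, Measurable fun ω => ∏ j ∈ Finset.range k, g j ω :=
    fun k => Finset.measurable_prod _ fun j _ => hgm j
  have hprodint : ∀ k, Integrable (fun ω => ∏ j ∈ Finset.range k, g j ω) ℙ := by
    intro k
    refine Integrable.mono' (exp_integrable hT hr k) (hprodm k).aestronglyMeasurable ?_
    filter_upwards with ω
    rw [Real.norm_eq_abs, ← hkey k ω, abs_of_pos (Real.exp_pos _)]
  have hgint : ∀ j, Integrable (g j) ℙ := by
    intro j
    refine Integrable.mono' (integrable_const 1) (hgm j).aestronglyMeasurable ?_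
    filter_upwards [hT.ae_mono] with ω h
    rw [Real.norm_eq_abs, abs_of_pos (Real.exp_pos _), ← Real.exp_zero, Real.exp_le_exp]
    have h2 : T j ω ≤ T (j + 1) ω := h (Nat.le_succ j)
    nlinarith
  have hgl : ∀ j, ∫ ω, g j ω = laplace r (T 1) := by
    intro j
    have hid : IdentDistrib (g j) (fun ω => Real.exp (-r * T 1 ω)) ℙ ℙ :=
      (hT.ident j).comp (Real.measurable_exp.comp (measurable_const.mul measurable_id))
    exact hid.integral_eq
  induction k with
  | zero => simp [hT.zero]
  | succ k ih =>
    have hindep : IndepFun (fun ω => ∏ j ∈ Finset.range k, g j ω) (g k) ℙ := by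
      have h1 : iIndepFun g ℙ := by
        have := hT.indep.comp (fun _ (x : ℝ) => Real.exp (-r * x))
          (fun _ => Real.measurable_exp.comp (measurable_const.mul measurable_id))
        exact this
      have h2 := h1.indepFun_finsetProd_of_notMem hgm (s := Finset.range k) (i := k)
        (by simp)
      have h3 : (∏ j ∈ Finset.range k, g j) = fun ω => ∏ j ∈ Finset.range k, g j ω := by
        funext ω; simp [Finset.prod_apply]
      rwa [h3] at h2
    have heq : (fun ω => Real.exp (-r * T (k+1) ω)) =
        fun ω => (∏ j ∈ Finset.range k, g j ω) * g k ω := by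
      funext ω
      rw [hkey (k+1) ω, Finset.prod_range_succ]
    rw [heq]
    have hmul := hindep.integral_fun_mul_eq_mul_integral (hprodint k).aestronglyMeasurable (hgint k).aestronglyMeasurable
    have hmul2 : ∫ ω, (∏ j ∈ Finset.range k, g j ω) * g k ω =
        (∫ ω, ∏ j ∈ Finset.range k, g j ω) * ∫ ω, g k ω := hmul
    rw [hmul2]
    have : ∫ ω, ∏ j ∈ Finset.range k, g j ω = laplace r (T 1) ^ k := by
      rw [← ih]
      exact integral_congr_ae (Filter.Eventually.of_forall fun ω => (hkey k ω).symm)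
    rw [this, hgl k, pow_succ]

lemma integral_pos_of_ae_pos {f : Ω → ℝ} (hi : Integrable f ℙ) (hf : ∀ᵐ ω, 0 < f ω) :
    0 < ∫ ω, f ω := by
  rw [integral_pos_iff_support_of_nonneg_ae (hf.mono fun ω h => h.le) hi]
  have hn : (ℙ : Measure Ω) {ω | ¬ (0 < f ω)} = 0 := by
    rw [← ae_iff]; exact hf
  have hc : (ℙ : Measure Ω) (Function.support f)ᶜ = 0 := by
    apply measure_mono_null _ hn
    intro ω hω
    simp only [Function.mem_support, mem_compl_iff, not_not] at hω
    simp [hω]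
  have h1 : (1 : ENNReal) ≤ (ℙ : Measure Ω) (Function.support f) := by
    have := measure_union_le (μ := (ℙ : Measure Ω)) (Function.support f) (Function.support f)ᶜ
    rw [union_compl_self, hc, add_zero, measure_univ] at this
    exact this
  exact lt_of_lt_of_le (by norm_num) h1

lemma laplace_pos (hT : IsRenewal T) (hr : 0 < r) : 0 < laplace r (T 1) :=
  integral_pos_of_ae_pos (exp_integrable hT hr 1)
    (Filter.Eventually.of_forall fun ω => Real.exp_pos _)

lemma laplace_lt_one (hT : IsRenewal T) (hr : 0 < r) : laplace r (T 1) < 1 := by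
  have h1 : ∀ᵐ ω, 0 < 1 - Real.exp (-r * T 1 ω) := by
    filter_upwards [hT.strictMono] with ω h
    have h2 : 0 < T 1 ω := by
      have := h (Nat.zero_lt_one)
      simpa [hT.zero ω] using this
    have : Real.exp (-r * T 1 ω) < 1 := by
      rw [← Real.exp_zero]
      apply Real.exp_lt_exp.2
      nlinarith
    linarith
  have h2 : 0 < ∫ ω, (1 - Real.exp (-r * T 1 ω)) :=
    integral_pos_of_ae_pos ((integrable_const 1).sub (exp_integrable hT hr 1)) h1
  rw [integral_sub (integrable_const 1) (exp_integrable hT hr 1), integral_const] at h2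
  simp only [measure_univ, probReal_univ, ENNReal.toReal_one, smul_eq_mul, one_mul, mul_one] at h2
  unfold laplace
  linarith

lemma lintegral_exp_eq (hT : IsRenewal T) (hr : 0 < r) (k : ℕ) :
    ∫⁻ ω, ENNReal.ofReal (Real.exp (-r * T k ω)) = ENNReal.ofReal (laplace r (T 1) ^ k) := by
  rw [← ofReal_integral_eq_lintegral_ofReal (exp_integrable hT hr k)
    (Filter.Eventually.of_forall fun ω => (Real.exp_pos _).le), integral_exp_eq hT hr k]

lemma tsum_lintegral_exp_ne_top (hT : IsRenewal T) (hr : 0 < r) :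
    (∑' k : ℕ, ∫⁻ ω, ENNReal.ofReal (Real.exp (-r * T k ω))) ≠ ⊤ := by
  have hsum : Summable fun k : ℕ => laplace r (T 1) ^ k :=
    summable_geometric_of_lt_one (laplace_pos hT hr).le (laplace_lt_one hT hr)
  calc (∑' k : ℕ, ∫⁻ ω, ENNReal.ofReal (Real.exp (-r * T k ω)))
      = ∑' k : ℕ, ENNReal.ofReal (laplace r (T 1) ^ k) := by
        congr 1; funext k; exact lintegral_exp_eq hT hr k
    _ = ENNReal.ofReal (∑' k : ℕ, laplace r (T 1) ^ k) := by
        rw [ENNReal.ofReal_tsum_of_nonneg (fun k => pow_nonneg (laplace_pos hT hr).le k) hsum]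
    _ ≠ ⊤ := ENNReal.ofReal_ne_top

lemma ae_summable_exp (hT : IsRenewal T) (hr : 0 < r) :
    ∀ᵐ ω, Summable fun k : ℕ => Real.exp (-r * T k ω) := by
  have hmeas : ∀ k : ℕ, Measurable fun ω => ENNReal.ofReal (Real.exp (-r * T k ω)) :=
    fun k => ENNReal.measurable_ofReal.comp (exp_measurable hT k)
  have h1 : ∫⁻ ω, ∑' k : ℕ, ENNReal.ofReal (Real.exp (-r * T k ω)) ≠ ⊤ := by
    rw [lintegral_tsum fun k => (hmeas k).aemeasurable]
    exact tsum_lintegral_exp_ne_top hT hr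
  have h2 : ∀ᵐ ω, (∑' k : ℕ, ENNReal.ofReal (Real.exp (-r * T k ω))) ≠ ⊤ :=
    ae_lt_top (by measurability) h1 |>.mono fun ω h => h.ne
  filter_upwards [h2] with ω h
  have h3 : Summable fun k : ℕ => (Real.exp (-r * T k ω)).toNNReal := by
    rw [← ENNReal.tsum_coe_ne_top_iff_summable]
    exact h
  have h4 := NNReal.summable_coe.2 h3
  apply h4.congr
  intro k
  simp [Real.coe_toNNReal _ (Real.exp_pos _).le]

lemma ae_tendsto_T (hT : IsRenewal T) (hr : 0 < r) :
    ∀ᵐ ω, Tendsto (fun k => T k ω) atTop atTop := by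
  filter_upwards [ae_summable_exp hT hr] with ω h
  rw [tendsto_atTop]
  intro M
  have h0 := h.tendsto_atTop_zero
  have h1 : ∀ᶠ k in atTop, Real.exp (-r * T k ω) < Real.exp (-r * M) :=
    h0.eventually_lt_const (Real.exp_pos _)
  filter_upwards [h1] with k hk
  rw [Real.exp_lt_exp] at hk
  nlinarith



variable {W : ℝ → Ω → ℝ} {b : ℕ → Ω → ℝ} {ηv θv σv : ℝ}

lemma aemeasurable_b (hW : IsBM W) (hT : IsRenewal T) (hAd : Admissible W T b) (k : ℕ) :
    AEMeasurable (b k) ℙ := by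
  apply aemeasurable_of_nullAlg
  refine (hAd.meas k).mono ?_ le_rfl
  unfold obsSigma
  apply sup_le
  · apply iSup_le; intro s
    exact comap_le_nullAlg (aemeasurable_W_comp W hW.meas hW.contPaths _
      (measurable_const.min (hT.meas k)))
  · apply iSup_le; intro j
    exact comap_le_nullAlg (hT.meas j).aemeasurable

lemma surplus_eq_sum {ω : Ω} (hmono : Monotone fun k => T k ω) {t : ℝ} {J : ℕ}
    (hJ : t ≤ T J ω) :
    surplus ηv θv σv W T b t ω = ∑ j ∈ Finset.range J,
      (drift ηv θv (b j ω) * (min t (T (j + 1) ω) - min t (T j ω)) +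
        vol σv (b j ω) * (W (min t (T (j + 1) ω)) ω - W (min t (T j ω)) ω)) := by
  unfold surplus
  apply tsum_eq_sum
  intro j hj
  have hj' : J ≤ j := by simpa using hj
  have h1 : min t (T j ω) = t := min_eq_left (hJ.trans (hmono hj'))
  have h2 : min t (T (j + 1) ω) = t := min_eq_left (hJ.trans (hmono (hj'.trans (Nat.le_succ j))))
  rw [h1, h2]
  simp

lemma aemeasurable_surplus (hW : IsBM W) (hT : IsRenewal T) (hAd : Admissible W T b)
    (hr : 0 < r) (τ : Ω → ℝ) (hτ : Measurable τ) :
    AEMeasurable (fun ω => surplus ηv θv σv W T b (τ ω) ω) ℙ := by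
  have hb := aemeasurable_b hW hT hAd
  have hterm : ∀ j : ℕ, AEMeasurable (fun ω =>
      drift ηv θv (b j ω) * (min (τ ω) (T (j + 1) ω) - min (τ ω) (T j ω)) +
      vol σv (b j ω) * (W (min (τ ω) (T (j + 1) ω)) ω - W (min (τ ω) (T j ω)) ω)) ℙ := by
    intro j
    have hW1 := aemeasurable_W_comp W hW.meas hW.contPaths _ (hτ.min (hT.meas (j + 1)))
    have hW2 := aemeasurable_W_comp W hW.meas hW.contPaths _ (hτ.min (hT.meas j))
    have hd : AEMeasurable (fun ω => drift ηv θv (b j ω)) ℙ := by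
      unfold drift
      exact aemeasurable_const.sub ((aemeasurable_const.sub (hb j)).mul aemeasurable_const)
    have hv : AEMeasurable (fun ω => vol σv (b j ω)) ℙ := by
      unfold vol
      exact aemeasurable_const.mul (hb j)
    exact (hd.mul (((hτ.min (hT.meas (j + 1))).aemeasurable).sub
      ((hτ.min (hT.meas j)).aemeasurable))).add (hv.mul (hW1.sub hW2))
  apply aemeasurable_tsum hterm
  filter_upwards [hT.ae_mono, ae_tendsto_T hT hr] with ω hmono htend
  obtain ⟨J, hJ⟩ := (htend.eventually_ge_atTop (τ ω)).exists
  apply summable_of_ne_finset_zero (s := Finset.range J)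
  intro j hj
  have hj' : J ≤ j := by simpa using hj
  have h1 : min (τ ω) (T j ω) = τ ω := min_eq_left (hJ.trans (hmono hj'))
  have h2 : min (τ ω) (T (j + 1) ω) = τ ω :=
    min_eq_left (hJ.trans (hmono (hj'.trans (Nat.le_succ j))))
  rw [h1, h2]
  simp

lemma continuousOn_surplus {ω : Ω} (hmono : Monotone fun k => T k ω)
    (htend : Tendsto (fun k => T k ω) atTop atTop)
    (hpath : Continuous fun t => W t ω) (t : ℝ) :
    ContinuousOn (fun s => surplus ηv θv σv W T b s ω) (Iic t) := by
  obtain ⟨J, hJ⟩ := (htend.eventually_ge_atTop t).exists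
  have hg : Continuous fun s => ∑ j ∈ Finset.range J,
      (drift ηv θv (b j ω) * (min s (T (j + 1) ω) - min s (T j ω)) +
        vol σv (b j ω) * (W (min s (T (j + 1) ω)) ω - W (min s (T j ω)) ω)) := by
    apply continuous_finset_sum
    intro j _
    have hm1 : Continuous fun s : ℝ => min s (T (j + 1) ω) := continuous_id.min continuous_const
    have hm2 : Continuous fun s : ℝ => min s (T j ω) := continuous_id.min continuous_const
    exact (continuous_const.mul (hm1.sub hm2)).add
      (continuous_const.mul ((hpath.comp hm1).sub (hpath.comp hm2)))
  apply ContinuousOn.congr hg.continuousOn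
  intro s hs
  exact surplus_eq_sum hmono ((mem_Iic.mp hs).trans hJ)

lemma sSup_image_rep {t : ℝ} (ht : 0 ≤ t) {g : ℝ → ℝ}
    (hg : ContinuousOn g (Icc 0 t)) :
    BddAbove (Set.range fun n : ℕ =>
        g (min (max ((Denumerable.ofNat ℚ n : ℚ) : ℝ) 0) t)) ∧
      sSup (g '' Icc 0 t) = ⨆ n : ℕ, g (min (max ((Denumerable.ofNat ℚ n : ℚ) : ℝ) 0) t) := by
  set q : ℕ → ℝ := fun n => ((Denumerable.ofNat ℚ n : ℚ) : ℝ) with hq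
  set p : ℕ → ℝ := fun n => min (max (q n) 0) t with hp
  have hpmem : ∀ n, p n ∈ Icc 0 t := fun n =>
    ⟨le_min (le_max_right _ _) ht, min_le_right _ _⟩
  obtain ⟨s', hs'mem, hmax⟩ := isCompact_Icc.exists_isMaxOn (nonempty_Icc.mpr ht) hg
  have hbdd : BddAbove (Set.range fun n => g (p n)) := by
    refine ⟨g s', ?_⟩
    rintro x ⟨n, rfl⟩
    exact hmax (hpmem n)
  refine ⟨hbdd, ?_⟩
  have hgreat : IsGreatest (g '' Icc 0 t) (g s') := by
    constructor
    · exact mem_image_of_mem _ hs'mem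
    · rintro x ⟨s, hs, rfl⟩
      exact hmax hs
  rw [hgreat.csSup_eq]
  apply le_antisymm
  · -- g s' ≤ ⨆ n, g (p n)
    have hu : ∀ m : ℕ, ∃ n : ℕ, |s' - q n| < 1 / (m + 1) := by
      intro m
      obtain ⟨qq, hqq⟩ := exists_rat_near s' (by positivity : (0:ℝ) < 1 / (m + 1))
      obtain ⟨n, rfl⟩ := (Denumerable.eqv ℚ).symm.surjective qq
      exact ⟨n, hqq⟩
    choose u hu using hu
    have hdist : ∀ m, |p (u m) - s'| ≤ |q (u m) - s'| := by
      intro m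
      have h1 : s' = min (max s' 0) t := by
        rw [max_eq_left hs'mem.1, min_eq_left hs'mem.2]
      calc |p (u m) - s'| = |min (max (q (u m)) 0) t - min (max s' 0) t| := by rw [← h1]
        _ ≤ max |max (q (u m)) 0 - max s' 0| |t - t| := abs_min_sub_min_le_max _ _ _ _
        _ = |max (q (u m)) 0 - max s' 0| := by simp
        _ ≤ |q (u m) - s'| := abs_max_sub_max_le_abs _ _ _
    have htends : Tendsto (fun m => p (u m)) atTop (nhds s') := by
      rw [tendsto_iff_dist_tendsto_zero]
      have hb : ∀ m : ℕ, dist (p (u m)) s' ≤ 1 / (m + 1) := by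
        intro m
        rw [Real.dist_eq]
        refine (hdist m).trans ?_
        rw [abs_sub_comm]
        exact (hu m).le
      exact squeeze_zero (fun m => dist_nonneg) hb tendsto_one_div_add_atTop_nhds_zero_nat
    have htendg : Tendsto (fun m => g (p (u m))) atTop (nhds (g s')) := by
      have hcw : ContinuousWithinAt g (Icc 0 t) s' := hg s' hs'mem
      apply hcw.tendsto.comp
      rw [tendsto_nhdsWithin_iff]
      exact ⟨htends, Filter.Eventually.of_forall fun m => hpmem (u m)⟩
    refine le_of_tendsto htendg (Filter.Eventually.of_forall fun m => le_ciSup hbdd (u m))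
  · exact ciSup_le fun n => hmax (hpmem n)

lemma aemeasurable_sSup (hW : IsBM W) (hT : IsRenewal T) (hAd : Admissible W T b)
    (hr : 0 < r) (τ : Ω → ℝ) (hτ : Measurable τ) (hτ0 : ∀ᵐ ω, 0 ≤ τ ω) :
    AEMeasurable (fun ω =>
      sSup ((fun s => surplus ηv θv σv W T b s ω) '' Icc 0 (τ ω))) ℙ := by
  set h : ℕ → Ω → ℝ := fun n ω =>
    surplus ηv θv σv W T b (min (max ((Denumerable.ofNat ℚ n : ℚ) : ℝ) 0) (τ ω)) ω with hh
  have hhm : ∀ n, AEMeasurable (h n) ℙ := by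
    intro n
    exact aemeasurable_surplus hW hT hAd hr _ (measurable_const.min hτ)
  have hae : ∀ᵐ ω, (BddAbove (Set.range fun n => h n ω) ∧
      sSup ((fun s => surplus ηv θv σv W T b s ω) '' Icc 0 (τ ω)) = ⨆ n, h n ω) := by
    filter_upwards [hT.ae_mono, ae_tendsto_T hT hr, hW.contPaths, hτ0]
      with ω hmono htend hpath hτω
    have hcont : ContinuousOn (fun s => surplus ηv θv σv W T b s ω) (Icc 0 (τ ω)) :=
      (continuousOn_surplus hmono htend hpath (τ ω)).mono Icc_subset_Iic_self
    exact sSup_image_rep hτω hcont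
  have hsup : AEMeasurable (fun ω => ⨆ n, h n ω) ℙ :=
    aemeasurable_ciSup hhm (hae.mono fun ω h => h.1)
  exact hsup.congr ((hae.mono fun ω h => h.2.symm) : _)

lemma aemeasurable_dd (hW : IsBM W) (hT : IsRenewal T) (hAd : Admissible W T b)
    (hr : 0 < r) (z : ℝ) (k : ℕ) :
    AEMeasurable (fun ω => dd ηv θv σv W T b z (T k ω) ω) ℙ := by
  unfold dd
  exact (aemeasurable_const.max (aemeasurable_sSup hW hT hAd hr (T k) (hT.meas k)
    (hT.ae_nonneg.mono fun ω h => h k))).sub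
    (aemeasurable_surplus hW hT hAd hr (T k) (hT.meas k))

lemma dd_ge (z t : ℝ) (ω : Ω) :
    z - surplus ηv θv σv W T b t ω ≤ dd ηv θv σv W T b z t ω := by
  unfold dd
  have := le_max_left z (sSup ((fun s => surplus ηv θv σv W T b s ω) '' Icc 0 t))
  linarith

lemma surplus_le_Y (hT : IsRenewal T) (hη : 0 < ηv) (hηθ : ηv < θv) (hσ : 0 < σv)
    (hAd : Admissible W T b) (k : ℕ) :
    ∀ᵐ ω, surplus ηv θv σv W T b (T k ω) ω ≤
      ηv * T k ω + σv * ∑ j ∈ Finset.range k, |W (T (j + 1) ω) ω - W (T j ω) ω| := by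
  filter_upwards [hT.ae_mono] with ω hmono
  rw [surplus_eq_sum hmono (le_refl (T k ω))]
  have hmin : ∀ j : ℕ, j ≤ k → min (T k ω) (T j ω) = T j ω :=
    fun j hj => min_eq_right (hmono hj)
  have hle : ∀ j ∈ Finset.range k,
      drift ηv θv (b j ω) * (min (T k ω) (T (j + 1) ω) - min (T k ω) (T j ω)) +
        vol σv (b j ω) * (W (min (T k ω) (T (j + 1) ω)) ω - W (min (T k ω) (T j ω)) ω) ≤
      ηv * (T (j + 1) ω - T j ω) + σv * |W (T (j + 1) ω) ω - W (T j ω) ω| := by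
    intro j hj
    have hjk : j + 1 ≤ k := Finset.mem_range.mp hj
    rw [hmin (j + 1) hjk, hmin j (Nat.le_of_succ_le hjk)]
    have hb0 := (hAd.mem j ω).1
    have hb1 := (hAd.mem j ω).2
    have hgap : 0 ≤ T (j + 1) ω - T j ω := sub_nonneg.mpr (hmono (Nat.le_succ j))
    have h1 : drift ηv θv (b j ω) * (T (j + 1) ω - T j ω) ≤ ηv * (T (j + 1) ω - T j ω) := by
      apply mul_le_mul_of_nonneg_right _ hgap
      unfold drift
      nlinarith
    have h2 : vol σv (b j ω) * (W (T (j + 1) ω) ω - W (T j ω) ω) ≤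
        σv * |W (T (j + 1) ω) ω - W (T j ω) ω| := by
      unfold vol
      set x := W (T (j + 1) ω) ω - W (T j ω) ω with hx
      have h3 : σv * b j ω * x ≤ σv * b j ω * |x| :=
        mul_le_mul_of_nonneg_left (le_abs_self x) (mul_nonneg hσ.le hb0)
      have h4 : σv * b j ω * |x| ≤ σv * |x| := by
        apply mul_le_mul_of_nonneg_right _ (abs_nonneg x)
        nlinarith
      linarith
    linarith
  calc (∑ j ∈ Finset.range k,
      (drift ηv θv (b j ω) * (min (T k ω) (T (j + 1) ω) - min (T k ω) (T j ω)) +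
        vol σv (b j ω) * (W (min (T k ω) (T (j + 1) ω)) ω - W (min (T k ω) (T j ω)) ω)))
      ≤ ∑ j ∈ Finset.range k,
        (ηv * (T (j + 1) ω - T j ω) + σv * |W (T (j + 1) ω) ω - W (T j ω) ω|) :=
        Finset.sum_le_sum hle
    _ = ηv * T k ω + σv * ∑ j ∈ Finset.range k, |W (T (j + 1) ω) ω - W (T j ω) ω| := by
        rw [Finset.sum_add_distrib, ← Finset.mul_sum, ← Finset.mul_sum,
          Finset.sum_range_sub (fun j => T j ω), hT.zero ω, sub_zero]

lemma aemeasurable_Y (hW : IsBM W) (hT : IsRenewal T) (k : ℕ) :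
    AEMeasurable (fun ω =>
      ηv * T k ω + σv * ∑ j ∈ Finset.range k, |W (T (j + 1) ω) ω - W (T j ω) ω|) ℙ := by
  apply AEMeasurable.add
  · exact (aemeasurable_const.mul (hT.meas k).aemeasurable)
  · apply aemeasurable_const.mul
    apply Finset.aemeasurable_fun_sum
    intro j _
    exact continuous_abs.measurable.comp_aemeasurable
      ((aemeasurable_W_comp W hW.meas hW.contPaths _ (hT.meas (j + 1))).sub
        (aemeasurable_W_comp W hW.meas hW.contPaths _ (hT.meas j)))

lemma integrable_expsum (hT : IsRenewal T) (hr : 0 < r) :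
    Integrable (fun ω => ∑' k : ℕ, Real.exp (-r * T k ω)) ℙ ∧
      ∫ ω, ∑' k : ℕ, Real.exp (-r * T k ω) = (1 - laplace r (T 1))⁻¹ := by
  have hnn : ∀ k : ℕ, ∀ ω, (0:ℝ) ≤ Real.exp (-r * T k ω) := fun k ω => (Real.exp_pos _).le
  have hlnorm : ∀ k : ℕ, ∫⁻ ω, ‖Real.exp (-r * T k ω)‖₊ ∂ℙ =
      ENNReal.ofReal (laplace r (T 1) ^ k) := by
    intro k
    rw [← lintegral_exp_eq hT hr k]
    apply lintegral_congr
    intro ω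
    rw [← Real.enorm_eq_ofReal (hnn k ω), enorm_eq_nnnorm]
  have hsumgeo : Summable fun k : ℕ => laplace r (T 1) ^ k :=
    summable_geometric_of_lt_one (laplace_pos hT hr).le (laplace_lt_one hT hr)
  have hfin : (∑' k : ℕ, ∫⁻ ω, ‖Real.exp (-r * T k ω)‖₊ ∂ℙ) ≠ ⊤ := by
    simp_rw [hlnorm]
    rw [← ENNReal.ofReal_tsum_of_nonneg (fun k => pow_nonneg (laplace_pos hT hr).le k) hsumgeo]
    exact ENNReal.ofReal_ne_top
  have hint : ∫ ω, ∑' k : ℕ, Real.exp (-r * T k ω) = ∑' k : ℕ, ∫ ω, Real.exp (-r * T k ω) :=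
    integral_tsum (fun k => (exp_measurable hT k).aestronglyMeasurable.aemeasurable.aestronglyMeasurable) hfin
  constructor
  · constructor
    · exact (aemeasurable_tsum (fun k => (exp_measurable hT k).aemeasurable)
        (ae_summable_exp hT hr)).aestronglyMeasurable
    · rw [hasFiniteIntegral_iff_norm]
      calc ∫⁻ ω, ENNReal.ofReal ‖∑' k : ℕ, Real.exp (-r * T k ω)‖ ∂ℙ
          ≤ ∫⁻ ω, ∑' k : ℕ, ENNReal.ofReal (Real.exp (-r * T k ω)) ∂ℙ := by
            apply lintegral_mono_ae
            filter_upwards [ae_summable_exp hT hr] with ω hsum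
            rw [Real.norm_eq_abs, abs_of_nonneg (tsum_nonneg (fun k => hnn k ω)),
              ← ENNReal.ofReal_tsum_of_nonneg (fun k => hnn k ω) hsum]
        _ = ∑' k : ℕ, ∫⁻ ω, ENNReal.ofReal (Real.exp (-r * T k ω)) ∂ℙ :=
            lintegral_tsum fun k =>
              (ENNReal.measurable_ofReal.comp (exp_measurable hT k)).aemeasurable
        _ < ⊤ := by
            rw [lt_top_iff_ne_top]
            convert tsum_lintegral_exp_ne_top hT hr using 2
  · rw [hint]
    have : ∀ k : ℕ, ∫ ω, Real.exp (-r * T k ω) = laplace r (T 1) ^ k :=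
      integral_exp_eq hT hr
    simp_rw [this]
    exact tsum_geometric_of_lt_one (laplace_pos hT hr).le (laplace_lt_one hT hr)

lemma indicator_mem01 (d x : ℝ) :
    0 ≤ (Ioi d).indicator (1 : ℝ → ℝ) x ∧ (Ioi d).indicator (1 : ℝ → ℝ) x ≤ 1 := by
  by_cases h : x ∈ Ioi d <;> simp [h]

lemma cost_nonneg (η θ σ' d r : ℝ) (z : ℝ) : 0 ≤ cost η θ σ' d r W T b z := by
  apply integral_nonneg
  intro ω
  apply tsum_nonneg
  intro k
  exact mul_nonneg (Real.exp_pos _).le (indicator_mem01 d _).1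

lemma cost_lower (hW : IsBM W) (hT : IsRenewal T) {d : ℝ}
    (hη : 0 < ηv) (hηθ : ηv < θv) (hσ : 0 < σv) (hr : 0 < r)
    (K : ℕ) (Ym : ℕ → Ω → ℝ) (hYmm : ∀ k, Measurable (Ym k))
    (hYae : ∀ k, ∀ᵐ ω, ηv * T k ω +
      σv * ∑ j ∈ Finset.range k, |W (T (j + 1) ω) ω - W (T j ω) ω| ≤ Ym k ω)
    (z : ℝ) (hAd : Admissible W T b) :
    ∑ k ∈ Finset.range K, (laplace r (T 1) ^ k - (ℙ {ω | z - d ≤ Ym k ω}).toReal)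
      ≤ cost ηv θv σv d r W T b z := by
  set f : ℕ → Ω → ℝ := fun k ω => Real.exp (-r * T k ω) *
    (Ioi d).indicator (1 : ℝ → ℝ) (dd ηv θv σv W T b z (T k ω) ω) with hf
  have hcost : cost ηv θv σv d r W T b z = ∫ ω, ∑' k, f k ω := rfl
  have hfm : ∀ k, AEMeasurable (f k) ℙ := fun k =>
    (exp_measurable hT k).aemeasurable.mul
      ((measurable_one.indicator measurableSet_Ioi).comp_aemeasurable
        (aemeasurable_dd hW hT hAd hr z k))
  have hf0 : ∀ k ω, 0 ≤ f k ω := fun k ω =>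
    mul_nonneg (Real.exp_pos _).le (indicator_mem01 d _).1
  have hfle : ∀ k ω, f k ω ≤ Real.exp (-r * T k ω) := by
    intro k ω
    have h1 := (indicator_mem01 d (dd ηv θv σv W T b z (T k ω) ω)).2
    exact mul_le_of_le_one_right (Real.exp_pos _).le h1
  have hfint : ∀ k, Integrable (f k) ℙ := by
    intro k
    refine (exp_integrable hT hr k).mono' (hfm k).aestronglyMeasurable ?_
    filter_upwards with ω
    rw [Real.norm_eq_abs, abs_of_nonneg (hf0 k ω)]
    exact hfle k ω
  have hsummae : ∀ᵐ ω, Summable fun k => f k ω := by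
    filter_upwards [ae_summable_exp hT hr] with ω h
    exact h.of_nonneg_of_le (fun k => hf0 k ω) (fun k => hfle k ω)
  have hFm : AEMeasurable (fun ω => ∑' k, f k ω) ℙ := aemeasurable_tsum hfm hsummae
  have hFint : Integrable (fun ω => ∑' k, f k ω) ℙ := by
    refine (integrable_expsum hT hr).1.mono' hFm.aestronglyMeasurable ?_
    filter_upwards [ae_summable_exp hT hr] with ω h
    rw [Real.norm_eq_abs, abs_of_nonneg (tsum_nonneg (fun k => hf0 k ω))]
    exact Summable.tsum_le_tsum (fun k => hfle k ω)
      (h.of_nonneg_of_le (fun k => hf0 k ω) (fun k => hfle k ω)) h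
  have hstep1 : ∫ ω, ∑ k ∈ Finset.range K, f k ω ≤ cost ηv θv σv d r W T b z := by
    rw [hcost]
    apply integral_mono_ae (integrable_finset_sum _ fun k _ => hfint k) hFint
    filter_upwards [hsummae] with ω h
    exact Summable.sum_le_tsum (Finset.range K) (fun k _ => hf0 k ω) h
  rw [integral_finset_sum _ fun k _ => hfint k] at hstep1
  refine le_trans (Finset.sum_le_sum fun k _ => ?_) hstep1
  set A : Set Ω := {ω | z - d ≤ Ym k ω} with hA
  have hAm : MeasurableSet A := measurableSet_le measurable_const (hYmm k)
  have hkey : ∀ᵐ ω, Real.exp (-r * T k ω) - f k ω ≤ A.indicator (1 : Ω → ℝ) ω := by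
    filter_upwards [hYae k, surplus_le_Y hT hη hηθ hσ hAd k, hT.ae_nonneg] with ω h1 h2 h3
    by_cases hdd : dd ηv θv σv W T b z (T k ω) ω ∈ Ioi d
    · have hfval : f k ω = Real.exp (-r * T k ω) := by
        rw [hf]
        simp only [Set.indicator_of_mem hdd, Pi.one_apply, mul_one]
      rw [hfval, sub_self]
      exact Set.indicator_nonneg (fun _ _ => zero_le_one) ω
    · have hω : ω ∈ A := by
        rw [hA]
        simp only [mem_setOf_eq]
        have h4 : dd ηv θv σv W T b z (T k ω) ω ≤ d := by
          simpa [mem_Ioi, not_lt] using hdd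
        have h5 := dd_ge (ηv := ηv) (θv := θv) (σv := σv) (W := W) (T := T) (b := b)
          z (T k ω) ω
        linarith
      have hfval : f k ω = 0 := by
        rw [hf]
        simp only [Set.indicator_of_notMem hdd, mul_zero]
      rw [hfval, sub_zero, Set.indicator_of_mem hω, Pi.one_apply, ← Real.exp_zero]
      apply Real.exp_le_exp.2
      nlinarith [h3 k]
  have hind : ∫ ω, A.indicator (1 : Ω → ℝ) ω = (ℙ A).toReal := integral_indicator_one hAm
  have hstep2 : ∫ ω, (Real.exp (-r * T k ω) - f k ω) ≤ (ℙ A).toReal := by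
    rw [← hind]
    exact integral_mono_ae ((exp_integrable hT hr k).sub (hfint k))
      ((integrable_const 1).indicator hAm) hkey
  rw [integral_sub (exp_integrable hT hr k) (hfint k), integral_exp_eq hT hr k] at hstep2
  linarith

lemma cost_zero_strategy (hW : IsBM W) (hT : IsRenewal T) {d : ℝ}
    (hη : 0 < ηv) (hηθ : ηv < θv) (hd : 0 < d) (hr : 0 < r) {z : ℝ} (hz : d < z) :
    cost ηv θv σv d r W T (fun _ _ => 0) z = (1 - laplace r (T 1))⁻¹ := by
  set b0 : ℕ → Ω → ℝ := fun _ _ => 0 with hb0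
  have hae : ∀ᵐ ω, ∀ k : ℕ,
      Real.exp (-r * T k ω) *
          (Ioi d).indicator (1 : ℝ → ℝ) (dd ηv θv σv W T b0 z (T k ω) ω)
        = Real.exp (-r * T k ω) := by
    filter_upwards [hT.ae_mono, ae_tendsto_T hT hr, hT.ae_nonneg] with ω hmono htend hpos
    have hsur : ∀ t : ℝ, 0 ≤ t → surplus ηv θv σv W T b0 t ω = (ηv - θv) * t := by
      intro t ht
      obtain ⟨J, hJ⟩ := (htend.eventually_ge_atTop t).exists
      rw [surplus_eq_sum hmono hJ]
      have hterm : ∀ j ∈ Finset.range J,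
          drift ηv θv (b0 j ω) * (min t (T (j + 1) ω) - min t (T j ω)) +
            vol σv (b0 j ω) * (W (min t (T (j + 1) ω)) ω - W (min t (T j ω)) ω)
          = (ηv - θv) * (min t (T (j + 1) ω) - min t (T j ω)) := by
        intro j _
        have hd0 : drift ηv θv (b0 j ω) = ηv - θv := by unfold drift; ring
        have hv0 : vol σv (b0 j ω) = 0 := by unfold vol; ring
        rw [hd0, hv0]; ring
      rw [Finset.sum_congr rfl hterm, ← Finset.mul_sum,
        Finset.sum_range_sub (fun j => min t (T j ω)), hT.zero ω, min_eq_left hJ,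
        min_eq_right ht]
      ring
    intro k
    have htk : 0 ≤ T k ω := hpos k
    have hsup : sSup ((fun s => surplus ηv θv σv W T b0 s ω) '' Icc 0 (T k ω)) = 0 := by
      apply IsGreatest.csSup_eq
      constructor
      · refine ⟨0, left_mem_Icc.mpr htk, ?_⟩
        show surplus ηv θv σv W T b0 0 ω = 0
        rw [hsur 0 le_rfl, mul_zero]
      · rintro x ⟨s, hs, rfl⟩
        show surplus ηv θv σv W T b0 s ω ≤ 0
        rw [hsur s hs.1]
        nlinarith [hs.1]
    have hdd : dd ηv θv σv W T b0 z (T k ω) ω = z - (ηv - θv) * T k ω := by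
      unfold dd
      rw [hsup, hsur (T k ω) htk, max_eq_left (by linarith : (0:ℝ) ≤ z)]
    have hmem : dd ηv θv σv W T b0 z (T k ω) ω ∈ Ioi d := by
      rw [hdd, mem_Ioi]
      nlinarith
    rw [Set.indicator_of_mem hmem, Pi.one_apply, mul_one]
  have hcost : cost ηv θv σv d r W T b0 z = ∫ ω, ∑' k : ℕ, Real.exp (-r * T k ω) := by
    apply integral_congr_ae
    filter_upwards [hae] with ω h
    exact tsum_congr h
  rw [hcost, (integrable_expsum hT hr).2]

lemma admissible_zero : Admissible W T fun _ _ => (0 : ℝ) :=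
  ⟨fun _ _ => ⟨le_rfl, zero_le_one⟩, fun _ => measurable_const⟩

lemma value_le (hW : IsBM W) (hT : IsRenewal T) {d : ℝ}
    (hη : 0 < ηv) (hηθ : ηv < θv) (hd : 0 < d) (hr : 0 < r) {z : ℝ} (hz : d < z) :
    value ηv θv σv d r W T z ≤ (1 - laplace r (T 1))⁻¹ := by
  unfold value
  have hmem : (1 - laplace r (T 1))⁻¹ ∈
      (fun b => cost ηv θv σv d r W T b z) '' {b | Admissible W T b} := by
    refine ⟨fun _ _ => 0, admissible_zero, ?_⟩
    exact cost_zero_strategy hW hT hη hηθ hd hr hz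
  refine csInf_le ⟨0, ?_⟩ hmem
  rintro x ⟨b', _, rfl⟩
  exact cost_nonneg _ _ _ _ _ _

end Aux

/-- The value function converges to `(1 - ℓ_T(r))⁻¹` as the initial drawdown tends to
infinity. -/
theorem value_tendsto_atTop {Ω : Type*} [MeasureSpace Ω] [IsProbabilityMeasure (ℙ : Measure Ω)]
    (σ η θ d r : ℝ) (hσ : 0 < σ) (hη : 0 < η) (hηθ : η < θ) (hd : 0 < d) (hr : 0 < r)
    (W : ℝ → Ω → ℝ) (hW : IsBM W) (T : ℕ → Ω → ℝ) (hT : IsRenewal T)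
    (hWT : Indep (sigmaGen W) (sigmaGen T) ℙ) :
    Tendsto (value η θ σ d r W T) atTop (nhds (1 - laplace r (T 1))⁻¹) := by
  have hl0 := laplace_pos hT hr
  have hl1 := laplace_lt_one hT hr
  rw [tendsto_order]
  constructor
  · intro a ha
    have hY : ∀ k : ℕ, AEMeasurable (fun ω =>
        η * T k ω + σ * ∑ j ∈ Finset.range k, |W (T (j + 1) ω) ω - W (T j ω) ω|) ℙ :=
      fun k => aemeasurable_Y hW hT k
    set Ym : ℕ → Ω → ℝ := fun k => (hY k).mk _ with hYmdef
    have hYmm : ∀ k, Measurable (Ym k) := fun k => (hY k).measurable_mk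
    have hYae : ∀ k, ∀ᵐ ω, η * T k ω +
        σ * ∑ j ∈ Finset.range k, |W (T (j + 1) ω) ω - W (T j ω) ω| ≤ Ym k ω :=
      fun k => (hY k).ae_eq_mk.mono fun ω h => le_of_eq h
    have hgeo : Tendsto (fun K => ∑ k ∈ Finset.range K, laplace r (T 1) ^ k) atTop
        (nhds ((1 - laplace r (T 1))⁻¹)) :=
      (hasSum_geometric_of_lt_one hl0.le hl1).tendsto_sum_nat
    obtain ⟨K, hK⟩ := (hgeo.eventually_const_lt ha).exists
    set S := ∑ k ∈ Finset.range K, laplace r (T 1) ^ k with hS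
    set δ := (S - a) / (K + 1) with hδ
    have hδpos : 0 < δ := div_pos (by linarith) (by positivity)
    have hmeas : ∀ k : ℕ, ∀ᶠ z : ℝ in atTop,
        ((ℙ : Measure Ω) {ω | z - d ≤ Ym k ω}).toReal < δ := by
      intro k
      have h1 : Tendsto (fun n : ℕ => (ℙ : Measure Ω) {ω | (n : ℝ) ≤ Ym k ω}) atTop
          (nhds ((ℙ : Measure Ω) (⋂ n : ℕ, {ω | (n : ℝ) ≤ Ym k ω}))) := by
        apply tendsto_measure_iInter_atTop
        · exact fun n => (measurableSet_le measurable_const (hYmm k)).nullMeasurableSet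
        · intro m n hmn ω hω
          simp only [mem_setOf_eq] at hω ⊢
          exact le_trans (by exact_mod_cast Nat.cast_le.mpr hmn) hω
        · exact ⟨0, measure_ne_top _ _⟩
      have h2 : (⋂ n : ℕ, {ω | (n : ℝ) ≤ Ym k ω}) = ∅ := by
        ext ω
        simp only [mem_iInter, mem_setOf_eq, mem_empty_iff_false, iff_false, not_forall]
        obtain ⟨n, hn⟩ := exists_nat_gt (Ym k ω)
        exact ⟨n, not_le.mpr hn⟩
      rw [h2, measure_empty] at h1
      have h3 : Tendsto (fun n : ℕ =>
          ((ℙ : Measure Ω) {ω | (n : ℝ) ≤ Ym k ω}).toReal) atTop (nhds 0) := by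
        have h4 := (ENNReal.tendsto_toReal (by simp : (0 : ENNReal) ≠ ⊤)).comp h1
        exact h4
      obtain ⟨n0, hn0⟩ := (h3.eventually_lt_const hδpos).exists
      filter_upwards [eventually_ge_atTop ((n0 : ℝ) + d)] with z hzn
      refine lt_of_le_of_lt ?_ hn0
      apply ENNReal.toReal_mono (measure_ne_top _ _)
      apply measure_mono
      intro ω hω
      simp only [mem_setOf_eq] at hω ⊢
      linarith
    have hall : ∀ᶠ z : ℝ in atTop, ∀ k ∈ Finset.range K,
        ((ℙ : Measure Ω) {ω | z - d ≤ Ym k ω}).toReal < δ := by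
      rw [eventually_all_finset]
      exact fun k _ => hmeas k
    filter_upwards [hall] with z hz
    have hlow : ∑ k ∈ Finset.range K,
        (laplace r (T 1) ^ k - ((ℙ : Measure Ω) {ω | z - d ≤ Ym k ω}).toReal)
        ≤ value η θ σ d r W T z := by
      unfold value
      apply le_csInf
      · exact ⟨_, ⟨fun _ _ => 0, admissible_zero, rfl⟩⟩
      · rintro x ⟨b', hb', rfl⟩
        exact cost_lower hW hT hη hηθ hσ hr K Ym hYmm hYae z hb'
    rw [Finset.sum_sub_distrib] at hlow
    have hsmall : ∑ k ∈ Finset.range K,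
        ((ℙ : Measure Ω) {ω | z - d ≤ Ym k ω}).toReal < S - a := by
      calc ∑ k ∈ Finset.range K, ((ℙ : Measure Ω) {ω | z - d ≤ Ym k ω}).toReal
          ≤ ∑ _k ∈ Finset.range K, δ := Finset.sum_le_sum fun k hk => (hz k hk).le
        _ = K * δ := by rw [Finset.sum_const, Finset.card_range]; ring
        _ < (K + 1) * δ := by nlinarith
        _ = S - a := by rw [hδ]; field_simp
    rw [← hS] at hlow
    linarith
  · intro a ha
    filter_upwards [eventually_gt_atTop d] with z hz
    exact lt_of_le_of_lt (value_le hW hT hη hηθ hd hr hz) ha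


end DrawdownPaper
end
end
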